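/- arXiv:1903.06287 — 4 statements merged into one kernel-verified Lean document; each statement's English description precedes it below -/
import Mathlib

section
/- Suppose the classifier is consistent, i.e. L_{D_n} → L* in probability as n → ∞, and the test sample size m_n → ∞. Then the out-of-sample error L̂_{m_n} converges in probability to the Bayes error L*: for every ε > 0, P(|L̂_{m_n} − L*| > ε) ≤ 2 exp(−m_n ε²/2) + P(L_{D_n} − L* > ε/2) → 0. -/
open MeasureTheory Filter
open scoped Topology ENNReal

/-! Split `L̂ − L*` as `(L̂ − L_{D_n}) + (L_{D_n} − L*)`, where the second term is nonnegative:
if `|L̂ − L*| > ε`, one of the two terms exceeds `ε/2`. Hoeffding bounds the first event by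
`2 exp(−2 m_n (ε/2)²) = 2 exp(−m_n ε²/2)`, which vanishes as `m_n → ∞`, and consistency makes
the probability of the second one vanish. -/

lemma measure_abs_sub_gt_le_add {Ω : Type*} [MeasurableSpace Ω] (μ : Measure Ω)
    {f g : Ω → ℝ} {c ε : ℝ} (hg : ∀ ω, c ≤ g ω) :
    μ {ω | |f ω - c| > ε} ≤ μ {ω | |f ω - g ω| > ε / 2} + μ {ω | g ω - c > ε / 2} := by
  refine (measure_mono fun ω hω => ?_).trans (measure_union_le _ _)
  by_contra hout
  simp only [Set.mem_union, Set.mem_ofPred_eq, not_or, not_lt] at hω hout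
  linarith [abs_sub_le (f ω) (g ω) c, abs_of_nonneg (sub_nonneg.mpr (hg ω))]

lemma tendsto_exp_neg_mul_nhds_zero {α : Type*} {l : Filter α} {f : α → ℝ}
    (hf : Tendsto f l atTop) {c : ℝ} (hc : 0 < c) :
    Tendsto (fun x => Real.exp (-f x * c)) l (𝓝 0) := by
  simp only [neg_mul]
  exact Real.tendsto_exp_neg_atTop_nhds_zero.comp (hf.atTop_mul_const hc)

theorem out_of_sample_error_consistent_general
    {Ω : Type*} [MeasurableSpace Ω] (μ : Measure Ω)
    (m : ℕ → ℕ) (Lhat L : ℕ → Ω → ℝ) (Lstar : ℝ)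
    (hm : Tendsto m atTop atTop)
    (hge : ∀ n ω, Lstar ≤ L n ω)
    (hcons : ∀ δ : ℝ, 0 < δ →
      Tendsto (fun n => μ {ω | |L n ω - Lstar| > δ}) atTop (𝓝 0))
    (hhoeff : ∀ n, ∀ δ : ℝ, 0 < δ →
      μ {ω | |Lhat n ω - L n ω| > δ}
        ≤ ENNReal.ofReal (2 * Real.exp (-2 * (m n : ℝ) * δ ^ 2))) :
    ∀ ε : ℝ, 0 < ε →
      (∀ n, μ {ω | |Lhat n ω - Lstar| > ε}
          ≤ ENNReal.ofReal (2 * Real.exp (-(m n : ℝ) * ε ^ 2 / 2))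
            + μ {ω | L n ω - Lstar > ε / 2}) ∧
      Tendsto (fun n => μ {ω | |Lhat n ω - Lstar| > ε}) atTop (𝓝 0) := by
  intro ε hε
  have hbound : ∀ n, μ {ω | |Lhat n ω - Lstar| > ε}
      ≤ ENNReal.ofReal (2 * Real.exp (-(m n : ℝ) * ε ^ 2 / 2))
        + μ {ω | L n ω - Lstar > ε / 2} := fun n => by
    refine (measure_abs_sub_gt_le_add μ (hge n)).trans (add_le_add_left ?_ _)
    refine (hhoeff n (ε / 2) (half_pos hε)).trans_eq ?_
    congr 3
    ring
  have hexp : Tendsto (fun n => ENNReal.ofReal (2 * Real.exp (-(m n : ℝ) * ε ^ 2 / 2)))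
      atTop (𝓝 0) := by
    have hreal := (tendsto_exp_neg_mul_nhds_zero (tendsto_natCast_atTop_atTop.comp hm)
      (by positivity : (0 : ℝ) < ε ^ 2 / 2)).const_mul 2
    rw [mul_zero] at hreal
    simp_rw [mul_div_assoc]
    rw [← ENNReal.ofReal_zero]
    exact ENNReal.tendsto_ofReal hreal
  have hexcess : Tendsto (fun n => μ {ω | L n ω - Lstar > ε / 2}) atTop (𝓝 0) :=
    tendsto_of_tendsto_of_tendsto_of_le_of_le tendsto_const_nhds (hcons (ε / 2) (half_pos hε))
      (fun _ => zero_le) fun _ =>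
        measure_mono <| Set.ofPred_subset_ofPred.mpr fun _ hω => hω.trans_le (le_abs_self _)
  refine ⟨hbound, tendsto_of_tendsto_of_tendsto_of_le_of_le tendsto_const_nhds ?_
    (fun _ => zero_le) hbound⟩
  simpa using hexp.add hexcess

/-- If the classifier is consistent (`L_{D_n} → L*` in probability) and the test size
`m_n → ∞`, then the out-of-sample error `L̂_{m_n}` converges in probability to the Bayes
error `L*`, with the explicit bound
`P(|L̂ − L*| > ε) ≤ 2 exp(−m_n ε²/2) + P(L_{D_n} − L* > ε/2) → 0`. -/
theorem out_of_sample_error_consistent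
    {Ω : Type*} [MeasurableSpace Ω] (μ : Measure Ω) [IsProbabilityMeasure μ]
    (m : ℕ → ℕ) (Lhat L : ℕ → Ω → ℝ) (Lstar : ℝ)
    (hm : Tendsto m atTop atTop)
    (hge : ∀ n ω, Lstar ≤ L n ω)
    (hcons : ∀ δ : ℝ, 0 < δ →
      Tendsto (fun n => μ {ω | |L n ω - Lstar| > δ}) atTop (𝓝 0))
    (hhoeff : ∀ n, ∀ δ : ℝ, 0 < δ →
      μ {ω | |Lhat n ω - L n ω| > δ}
        ≤ ENNReal.ofReal (2 * Real.exp (-2 * (m n : ℝ) * δ ^ 2))) :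
    ∀ ε : ℝ, 0 < ε →
      (∀ n, μ {ω | |Lhat n ω - Lstar| > ε}
          ≤ ENNReal.ofReal (2 * Real.exp (-(m n : ℝ) * ε ^ 2 / 2))
            + μ {ω | L n ω - Lstar > ε / 2}) ∧
      Tendsto (fun n => μ {ω | |Lhat n ω - Lstar| > ε}) atTop (𝓝 0) :=
  out_of_sample_error_consistent_general μ m Lhat L Lstar hm hge hcons hhoeff
end

section
/- If the classifier is consistent and P_X ≠ P_Y, then the test rejecting when L̂_{m_n} − 1/2 < −√(−2 log(α)/m_n) is consistent: the probability of rejection converges to 1 as n → ∞ (with m_n → ∞). -/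
/-!
Put `δ = (1/2 - L*)/3`. The threshold `√(-2 log α / m_n)` tends to `0`, so eventually it is
below `δ`; once it is, the test can only fail to reject if `L_n` is `δ`-far from `L*` or
`L̂_n` is `δ`-far from `L_n`. The first event has vanishing probability by consistency of the
classifier, the second by the Hoeffding bound since `m_n → ∞`.
-/

open MeasureTheory Filter
open scoped Topology ENNReal

theorem tendsto_sqrt_const_div_atTop {ι : Type*} {l : Filter ι} {f : ι → ℝ}
    (hf : Tendsto f l atTop) (c : ℝ) :
    Tendsto (fun i => Real.sqrt (c / f i)) l (𝓝 0) := by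
  simpa [Function.comp_def] using
    (Real.continuous_sqrt.tendsto 0).comp (tendsto_const_nhds.div_atTop hf)

theorem tendsto_ofReal_hoeffding_bound {ι : Type*} {l : Filter ι} {f : ι → ℝ}
    (hf : Tendsto f l atTop) {δ : ℝ} (hδ : δ ≠ 0) :
    Tendsto (fun i => ENNReal.ofReal (2 * Real.exp (-2 * f i * δ ^ 2))) l (𝓝 0) := by
  have hexponent : Tendsto (fun i => -2 * f i * δ ^ 2) l atBot :=
    (hf.atTop_mul_const_of_neg (by nlinarith [sq_pos_of_ne_zero hδ] : -2 * δ ^ 2 < 0)).congr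
      fun i => by ring
  simpa using ENNReal.tendsto_ofReal ((Real.tendsto_exp_atBot.comp hexponent).const_mul 2)

section Measure

variable {Ω ι : Type*} [MeasurableSpace Ω] {μ : Measure Ω} {l : Filter ι}

theorem tendsto_measure_zero_of_subset_union {s a b : ι → Set Ω}
    (hsub : ∀ᶠ i in l, s i ⊆ a i ∪ b i)
    (ha : Tendsto (fun i => μ (a i)) l (𝓝 0)) (hb : Tendsto (fun i => μ (b i)) l (𝓝 0)) :
    Tendsto (fun i => μ (s i)) l (𝓝 0) := by
  refine tendsto_of_tendsto_of_tendsto_of_le_of_le' tendsto_const_nhds (by simpa using ha.add hb)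
    (Eventually.of_forall fun _ => zero_le) ?_
  filter_upwards [hsub] with i hi
  exact (measure_mono hi).trans (measure_union_le _ _)

theorem tendsto_measure_one_of_tendsto_measure_compl [IsProbabilityMeasure μ] {s : ι → Set Ω}
    (hcompl : Tendsto (fun i => μ (s i)ᶜ) l (𝓝 0)) :
    Tendsto (fun i => μ (s i)) l (𝓝 1) := by
  have hlower : Tendsto (fun i => 1 - μ (s i)ᶜ) l (𝓝 1) := by
    simpa using ENNReal.Tendsto.sub tendsto_const_nhds hcompl (Or.inl ENNReal.one_ne_top)
  refine tendsto_of_tendsto_of_tendsto_of_le_of_le hlower tendsto_const_nhds (fun i => ?_)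
    (fun _ => prob_le_one)
  rw [tsub_le_iff_right, ← measure_univ (μ := μ)]
  exact measure_univ_le_add_compl _

end Measure

theorem sub_lt_neg_of_abs_sub_le {x y c a t δ : ℝ}
    (hy : |y - c| ≤ δ) (hx : |x - y| ≤ δ) (ht : t + 2 * δ < a - c) :
    x - a < -t := by
  linarith [(abs_le.mp hy).2, (abs_le.mp hx).2]

theorem binomial_test_consistent_general
    {Ω : Type*} [MeasurableSpace Ω] (μ : Measure Ω) [IsProbabilityMeasure μ]
    (m : ℕ → ℕ) (Lhat L : ℕ → Ω → ℝ) (Lstar : ℝ) (α : ℝ)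
    (hm : Tendsto m atTop atTop)
    (hLstar : Lstar < 1/2)
    (hcons : ∀ δ : ℝ, 0 < δ →
      Tendsto (fun n => μ {ω | |L n ω - Lstar| > δ}) atTop (𝓝 0))
    (hhoeff : ∀ n, ∀ δ : ℝ, 0 < δ →
      μ {ω | |Lhat n ω - L n ω| > δ}
        ≤ ENNReal.ofReal (2 * Real.exp (-2 * (m n : ℝ) * δ ^ 2))) :
    Tendsto (fun n =>
        μ {ω | Lhat n ω - 1/2 < -Real.sqrt (-(2 * Real.log α) / (m n : ℝ))})
      atTop (𝓝 1) := by
  set δ : ℝ := (1/2 - Lstar) / 3 with hδdef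
  have hδ : 0 < δ := by positivity
  have hmr : Tendsto (fun n => (m n : ℝ)) atTop atTop := tendsto_natCast_atTop_atTop.comp hm
  have hLhat : Tendsto (fun n => μ {ω | |Lhat n ω - L n ω| > δ}) atTop (𝓝 0) :=
    tendsto_of_tendsto_of_tendsto_of_le_of_le tendsto_const_nhds
      (tendsto_ofReal_hoeffding_bound hmr hδ.ne') (fun _ => zero_le) (fun n => hhoeff n δ hδ)
  have hthreshold : ∀ᶠ n in atTop, Real.sqrt (-(2 * Real.log α) / (m n : ℝ)) < δ :=
    (tendsto_sqrt_const_div_atTop hmr _).eventually (eventually_lt_nhds hδ)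
  refine tendsto_measure_one_of_tendsto_measure_compl
    (tendsto_measure_zero_of_subset_union ?_ (hcons δ hδ) hLhat)
  filter_upwards [hthreshold] with n hn ω hω
  by_contra hfar
  simp only [Set.mem_union, Set.mem_ofPred_eq, not_or, not_lt] at hfar
  exact hω (sub_lt_neg_of_abs_sub_le hfar.1 hfar.2 (by linarith [hδdef]))

/-- If the classifier is consistent and the two distributions differ (so that the Bayes
error satisfies `L* < 1/2`), the test rejecting when
`L̂_{m_n} − 1/2 < −√(−2 log α / m_n)` is consistent: its rejection probability tends
to 1 as `n → ∞`. -/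
theorem binomial_test_consistent
    {Ω : Type*} [MeasurableSpace Ω] (μ : Measure Ω) [IsProbabilityMeasure μ]
    (m : ℕ → ℕ) (Lhat L : ℕ → Ω → ℝ) (Lstar : ℝ) (α : ℝ)
    (hα0 : 0 < α) (hα1 : α < 1)
    (hm : Tendsto m atTop atTop)
    (hge : ∀ n ω, Lstar ≤ L n ω)
    (hLstar : Lstar < 1/2)
    (hcons : ∀ δ : ℝ, 0 < δ →
      Tendsto (fun n => μ {ω | |L n ω - Lstar| > δ}) atTop (𝓝 0))
    (hhoeff : ∀ n, ∀ δ : ℝ, 0 < δ →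
      μ {ω | |Lhat n ω - L n ω| > δ}
        ≤ ENNReal.ofReal (2 * Real.exp (-2 * (m n : ℝ) * δ ^ 2))) :
    Tendsto (fun n =>
        μ {ω | Lhat n ω - 1/2 < -Real.sqrt (-(2 * Real.log α) / (m n : ℝ))})
      atTop (𝓝 1) :=
  binomial_test_consistent_general μ m Lhat L Lstar α hm hLstar hcons hhoeff
end

section
/- In the martingale array of Theorem (CLT for the test error), the sum of squared martingale differences satisfies Σ_{j=1}^{m_n} X_{n,j}² →_p L*(1−L*), where X_{n,j} = (ε_j − L_{D_n})/√(m_n), given that L_{D_n} →_p L* and the ε_j are conditionally i.i.d. Bernoulli(L_{D_n}) given D_n. -/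
open MeasureTheory ProbabilityTheory Filter
open scoped Topology Classical

/-- Conditionally i.i.d. Bernoulli(`L`) errors given the sub-σ-algebra `mD`. -/
def CondIIDBernoulli {Ω : Type*} {m0 : MeasurableSpace Ω} (μ : Measure Ω)
    (mD : MeasurableSpace Ω) {m : ℕ} (ε : Fin m → Ω → Prop) (L : Ω → ℝ) : Prop :=
  ∀ b : Fin m → Bool,
    μ[Set.indicator {ω | ∀ i, ε i ω ↔ b i = true} (fun _ => (1 : ℝ)) | mD]
      =ᵐ[μ] fun ω => ∏ i, (if b i then L ω else 1 - L ω)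

/-!
Given `D_n`, the errors are i.i.d. Bernoulli(`L_{D_n}`), so the empirical error frequency
`A_n = (1/m_n) Σ_j ε_j` has conditional variance `L(1-L)/m_n ≤ 1/(4 m_n)`; Chebyshev's inequality
applied to the explicit product weights of the error patterns gives `P(|A_n - L_{D_n}| > s) ≤
1/(4 m_n s²)` after integrating over `D_n`. Since `ε_j² = ε_j`,
`(1/m_n) Σ_j (ε_j - L)² - L*(1-L*) = (1-2L)(A_n - L) + (L - L*)(1 - L - L*)`,
and both terms tend to `0` in probability.
-/

section BernoulliPatterns

variable {α : Type*} [Fintype α] (u v : α → ℝ)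

lemma Fin.sum_univ_pi_cons {M : ℕ} (F : (Fin (M + 1) → α) → ℝ) :
    ∑ b, F b = ∑ a, ∑ b : Fin M → α, F (Fin.cons a b) := by
  rw [← (Fin.consEquiv fun _ => α).sum_comp, Fintype.sum_prod_type]; rfl

lemma sum_prod_pi_eq_one (hv : ∑ a, v a = 1) (M : ℕ) : ∑ b : Fin M → α, ∏ i, v (b i) = 1 := by
  rw [← Fintype.sum_pow, hv, one_pow]

lemma sum_sum_mul_prod_pi (hv : ∑ a, v a = 1) (M : ℕ) :
    ∑ b : Fin M → α, (∑ i, u (b i)) * ∏ i, v (b i) = M * ∑ a, u a * v a := by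
  induction M with
  | zero => simp
  | succ M ih =>
    rw [Fin.sum_univ_pi_cons]
    simp only [Fin.sum_univ_succ, Fin.prod_univ_succ, Fin.cons_zero, Fin.cons_succ]
    calc ∑ a, ∑ b : Fin M → α, (u a + ∑ i, u (b i)) * (v a * ∏ i, v (b i))
        = ∑ a, (u a * v a * ∑ b : Fin M → α, ∏ i, v (b i)
            + v a * ∑ b : Fin M → α, (∑ i, u (b i)) * ∏ i, v (b i)) := by
          simp only [Finset.mul_sum, ← Finset.sum_add_distrib]
          exact Fintype.sum_congr _ _ fun a => Fintype.sum_congr _ _ fun b => by ring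
      _ = (M + 1 : ℕ) * ∑ a, u a * v a := by
          rw [sum_prod_pi_eq_one v hv, ih, Finset.sum_add_distrib, ← Finset.sum_mul,
            ← Finset.sum_mul, hv]
          push_cast; ring

lemma sum_sq_sum_mul_prod_pi (hv : ∑ a, v a = 1) (hu : ∑ a, u a * v a = 0) (M : ℕ) :
    ∑ b : Fin M → α, (∑ i, u (b i)) ^ 2 * ∏ i, v (b i) = M * ∑ a, u a ^ 2 * v a := by
  induction M with
  | zero => simp
  | succ M ih =>
    rw [Fin.sum_univ_pi_cons]
    simp only [Fin.sum_univ_succ, Fin.prod_univ_succ, Fin.cons_zero, Fin.cons_succ]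
    calc ∑ a, ∑ b : Fin M → α, (u a + ∑ i, u (b i)) ^ 2 * (v a * ∏ i, v (b i))
        = ∑ a, (u a ^ 2 * v a * ∑ b : Fin M → α, ∏ i, v (b i)
            + 2 * (u a * v a) * ∑ b : Fin M → α, (∑ i, u (b i)) * ∏ i, v (b i)
            + v a * ∑ b : Fin M → α, (∑ i, u (b i)) ^ 2 * ∏ i, v (b i)) := by
          simp only [Finset.mul_sum, ← Finset.sum_add_distrib]
          exact Fintype.sum_congr _ _ fun a => Fintype.sum_congr _ _ fun b => by ring
      _ = (M + 1 : ℕ) * ∑ a, u a ^ 2 * v a := by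
          rw [sum_prod_pi_eq_one v hv, ih, sum_sum_mul_prod_pi u v hv, Finset.sum_add_distrib,
            Finset.sum_add_distrib, ← Finset.sum_mul, ← Finset.sum_mul, ← Finset.sum_mul,
            ← Finset.mul_sum, hu, hv]
          push_cast; ring

lemma Finset.sum_mul_ite_lt_abs_le {ι : Type*} (s : Finset ι) (f q : ι → ℝ)
    (hq : ∀ i ∈ s, 0 ≤ q i) {t : ℝ} (ht : 0 < t) :
    ∑ i ∈ s, q i * (if t < |f i| then 1 else 0) ≤ (∑ i ∈ s, f i ^ 2 * q i) / t ^ 2 := by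
  rw [Finset.sum_div]
  refine Finset.sum_le_sum fun i hi => ?_
  split_ifs with hfi
  · have : t ^ 2 ≤ f i ^ 2 := by nlinarith [sq_abs (f i), abs_nonneg (f i)]
    rw [mul_one, le_div_iff₀ (by positivity)]
    exact mul_le_mul_of_nonneg_left this (hq i hi) |>.trans_eq (mul_comm _ _)
  · rw [mul_zero]; have := hq i hi; positivity

lemma sum_bernoulli_mul_ite_lt_abs_le {M : ℕ} (hM : 0 < M) {x : ℝ} (hx : x ∈ Set.Icc 0 1)
    {s : ℝ} (hs : 0 < s) :
    ∑ b : Fin M → Bool, (∏ i, if b i then x else 1 - x) *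
        (if s < |(∑ i, if b i then (1 : ℝ) else 0) / M - x| then 1 else 0)
      ≤ 1 / (4 * M * s ^ 2) := by
  obtain ⟨hx0, hx1⟩ := hx
  have hM' : (0 : ℝ) < M := by exact_mod_cast hM
  set u : Bool → ℝ := fun c => (if c then 1 else 0) - x
  set v : Bool → ℝ := fun c => if c then x else 1 - x
  have hv : ∑ c, v c = 1 := by simp [v]
  have hu : ∑ c, u c * v c = 0 := by simp [u, v]; ring
  have hdev : ∀ b : Fin M → Bool,
      |(∑ i, if b i then (1 : ℝ) else 0) / M - x| = |∑ i, u (b i)| / M := by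
    intro b
    rw [← abs_of_pos hM', ← abs_div, abs_of_pos hM']
    simp only [u, Finset.sum_sub_distrib, Finset.sum_const, Finset.card_univ, Fintype.card_fin,
      nsmul_eq_mul]
    field_simp
  calc _ = ∑ b : Fin M → Bool, (∏ i, v (b i)) *
          (if M * s < |∑ i, u (b i)| then 1 else 0) := by
        refine Fintype.sum_congr _ _ fun b => ?_
        simp only [hdev, lt_div_iff₀ hM', mul_comm s, v]
    _ ≤ (∑ b : Fin M → Bool, (∑ i, u (b i)) ^ 2 * ∏ i, v (b i)) / (M * s) ^ 2 :=
        Finset.sum_mul_ite_lt_abs_le _ _ _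
          (fun b _ => Finset.prod_nonneg fun i _ => by simp only [v]; split_ifs <;> linarith)
          (by positivity)
    _ = x * (1 - x) / (M * s ^ 2) := by
        rw [sum_sq_sum_mul_prod_pi u v hv hu]
        simp only [u, v, Fintype.sum_bool, if_true, Bool.false_eq_true, if_false]
        field_simp; ring
    _ ≤ 1 / (4 * M * s ^ 2) := by
        rw [div_le_div_iff₀ (by positivity) (by positivity)]
        nlinarith [sq_nonneg (x - 1 / 2), mul_pos hM' (pow_pos hs 2)]

end BernoulliPatterns

section Disintegration

variable {Ω ι : Type*} {mD m0 : MeasurableSpace Ω} {μ : Measure Ω} [Fintype ι] {β : Ω → ι}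
  {p : ι → Ω → ℝ}

lemma le_of_condExp_indicator_fiber [NeZero μ]
    (hp : ∀ i, μ[(β ⁻¹' {i}).indicator (fun _ => (1 : ℝ)) | mD] =ᵐ[μ] p i)
    (hsum : ∀ᵐ ω ∂μ, ∑ i, p i ω = 1) : mD ≤ m0 := by
  by_contra hm
  have hzero : ∀ᵐ ω ∂μ, ∀ i, p i ω = 0 := ae_all_iff.2 fun i =>
    (hp i).symm.trans (by rw [condExp_of_not_le hm]; rfl)
  obtain ⟨ω, hω1, hω0⟩ := (hsum.and hzero).exists
  simp [hω0] at hω1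

lemma nullMeasurableSet_fiber_of_condExp_indicator [IsProbabilityMeasure μ]
    (hp : ∀ i, μ[(β ⁻¹' {i}).indicator (fun _ => (1 : ℝ)) | mD] =ᵐ[μ] p i)
    (hsum : ∀ᵐ ω ∂μ, ∑ i, p i ω = 1) (i : ι) : NullMeasurableSet (β ⁻¹' {i}) μ := by
  have hm := le_of_condExp_indicator_fiber hp hsum
  set G := Finset.univ.filter fun j => NullMeasurableSet (β ⁻¹' {j}) μ
  have hG : ∀ j, j ∈ G ↔ NullMeasurableSet (β ⁻¹' {j}) μ := by simp [G]
  -- A fiber that is not null-measurable has a non-integrable indicator, so its conditional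
  -- probability is the junk value `0`; hence the null-measurable fibers carry all the mass.
  have hp_out : ∀ j ∉ G, p j =ᵐ[μ] 0 := fun j hj => by
    have hint : ¬ Integrable ((β ⁻¹' {j}).indicator fun _ => (1 : ℝ)) μ := fun hint =>
      hj ((hG j).2 ((aemeasurable_indicator_const_iff 1).1 hint.aemeasurable))
    simpa [condExp_of_not_integrable hint] using (hp j).symm
  have hp_in : ∀ j ∈ G, μ.real (β ⁻¹' {j}) = ∫ ω, p j ω ∂μ := fun j hj => by
    rw [← integral_congr_ae (hp j), integral_condExp hm, integral_indicator₀ ((hG j).1 hj),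
      setIntegral_const, smul_eq_mul, mul_one]
  have hsumG : ∀ᵐ ω ∂μ, ∑ j ∈ G, p j ω = 1 := by
    filter_upwards [hsum, ae_all_iff.2 fun j => (ae_all_iff.2 fun (_ : j ∉ G) => hp_out j ‹_›)]
      with ω hω hω0
    rw [← hω, ← Finset.sum_subset (Finset.subset_univ G) fun j _ hj => hω0 j hj]
  have hGmeas : NullMeasurableSet (β ⁻¹' G) μ := by
    rw [← Finset.set_biUnion_preimage_singleton]
    exact .biUnion G.countable_toSet fun j hj => (hG j).1 hj
  have hGfull : μ.real (β ⁻¹' G) = 1 := by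
    rw [← Finset.set_biUnion_preimage_singleton,
      measureReal_biUnion_finset₀ (fun j _ k _ hjk =>
        (Set.pairwiseDisjoint_fiber β _ (Set.mem_univ j) (Set.mem_univ k) hjk).aedisjoint)
        fun j hj => (hG j).1 hj,
      Finset.sum_congr rfl hp_in, ← integral_finsetSum, integral_congr_ae hsumG, integral_const,
      smul_eq_mul, mul_one, probReal_univ]
    exact fun j _ => integrable_condExp.congr (hp j)
  by_cases hi : i ∈ G
  · exact (hG i).1 hi
  · refine .of_null (measure_mono_null (t := (β ⁻¹' G)ᶜ) (fun ω hω => ?_) ?_)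
    · simp_all
    · rw [← measureReal_eq_zero_iff, probReal_compl_eq_one_sub₀ hGmeas, hGfull, sub_self]

lemma integral_apply_fiber_eq_integral_sum_mul [IsFiniteMeasure μ] (hm : mD ≤ m0)
    (hβ : ∀ i, NullMeasurableSet (β ⁻¹' {i}) μ)
    (hp : ∀ i, μ[(β ⁻¹' {i}).indicator (fun _ => (1 : ℝ)) | mD] =ᵐ[μ] p i)
    {h : ι → Ω → ℝ} (hh : ∀ i, AEStronglyMeasurable[mD] (h i) μ) {C : ℝ}
    (hC : ∀ i ω, ‖h i ω‖ ≤ C) :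
    ∫ ω, h (β ω) ω ∂μ = ∫ ω, ∑ i, p i ω * h i ω ∂μ := by
  set I : ι → Ω → ℝ := fun i => (β ⁻¹' {i}).indicator fun _ => 1
  have hI : ∀ i, Integrable (I i) μ := fun i => (integrable_const 1).indicator₀ (hβ i)
  have hhI : ∀ i, Integrable (h i * I i) μ := fun i =>
    (hI i).bdd_mul ((hh i).mono hm) (.of_forall (hC i))
  have hfiber : (fun ω => h (β ω) ω) = fun ω => ∑ i, (h i * I i) ω := by
    ext ω
    rw [Finset.sum_eq_single (β ω) (fun j _ hj => by simp [I, Ne.symm hj])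
      (by simp)]
    simp [I]
  have hpI : ∀ i, ∫ ω, (h i * I i) ω ∂μ = ∫ ω, p i ω * h i ω ∂μ := fun i => by
    rw [← integral_condExp hm, integral_congr_ae
      ((condExp_stronglyMeasurable_mul_of_bound₀ hm (hh i) (hI i) C (.of_forall (hC i))).trans
        ((EventuallyEq.refl _ (h i)).mul (hp i)))]
    simp only [Pi.mul_apply, mul_comm]
  have hph : ∀ i, Integrable (fun ω => p i ω * h i ω) μ := fun i =>
    ((integrable_condExp.congr (hp i)).bdd_mul ((hh i).mono hm) (.of_forall (hC i))).congr
      (.of_forall fun ω => mul_comm _ _)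
  rw [hfiber, integral_finsetSum _ fun i _ => hhI i, integral_finsetSum _ fun i _ => hph i]
  exact Finset.sum_congr rfl fun i _ => hpI i

end Disintegration

lemma Measurable.comp_aestronglyMeasurable {Ω : Type*} {m m0 : MeasurableSpace Ω}
    {μ : Measure[m0] Ω} {f : Ω → ℝ} {φ : ℝ → ℝ} (hφ : Measurable φ)
    (hf : AEStronglyMeasurable[m] f μ) : AEStronglyMeasurable[m] (φ ∘ f) μ :=
  ⟨_, (hφ.comp hf.stronglyMeasurable_mk.measurable).stronglyMeasurable, hf.ae_eq_mk.fun_comp φ⟩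

noncomputable def errorPattern {Ω : Type*} {M : ℕ} (ε : Fin M → Ω → Prop) (ω : Ω) : Fin M → Bool :=
  fun j => decide (ε j ω)

namespace CondIIDBernoulli

variable {Ω : Type*} {mD m0 : MeasurableSpace Ω} {μ : Measure Ω} {M : ℕ} {ε : Fin M → Ω → Prop}
  {L : Ω → ℝ}

lemma condExp_indicator_errorPattern (hε : CondIIDBernoulli μ mD ε L) (b : Fin M → Bool) :
    μ[(errorPattern ε ⁻¹' {b}).indicator (fun _ => (1 : ℝ)) | mD]
      =ᵐ[μ] fun ω => ∏ i, if b i then L ω else 1 - L ω := by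
  convert hε b using 4
  ext ω
  simp only [errorPattern, Set.mem_preimage, Set.mem_singleton_iff, Set.mem_ofPred_eq, funext_iff]
  exact forall_congr' fun i => by cases b i <;> simp

-- `L` is the conditional mean of the empirical frequency, by the first-moment identity.
lemma aestronglyMeasurable (hM : 0 < M) (hε : CondIIDBernoulli μ mD ε L) :
    AEStronglyMeasurable[mD] L μ := by
  set cnt : (Fin M → Bool) → ℝ := fun b => ∑ i, if b i then 1 else 0
  refine AEStronglyMeasurable.congr (f := fun ω => ∑ b, cnt b / M *
    μ[(errorPattern ε ⁻¹' {b}).indicator (fun _ => (1 : ℝ)) | mD] ω) ?_ ?_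
  · exact (Finset.stronglyMeasurable_fun_sum _ fun b _ =>
      stronglyMeasurable_condExp.const_mul (cnt b / M)).aestronglyMeasurable
  · filter_upwards [ae_all_iff.2 hε.condExp_indicator_errorPattern] with ω hω
    have hmean := sum_sum_mul_prod_pi (fun c : Bool => if c then (1 : ℝ) else 0)
      (fun c : Bool => if c then L ω else 1 - L ω) (by simp) M
    simp only [Fintype.sum_bool, if_true, Bool.false_eq_true, if_false] at hmean
    simp only [hω, div_mul_eq_mul_div, ← Finset.sum_div]
    field_simp
    simpa [cnt, mul_comm (L ω)] using hmean

lemma measure_lt_abs_mean_sub_le [IsProbabilityMeasure μ] (hM : 0 < M)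
    (hε : CondIIDBernoulli μ mD ε L) (hL : ∀ ω, L ω ∈ Set.Icc (0 : ℝ) 1) {s : ℝ} (hs : 0 < s) :
    μ {ω | s < |(∑ j, if ε j ω then (1 : ℝ) else 0) / M - L ω|}
      ≤ ENNReal.ofReal (1 / (4 * M * s ^ 2)) := by
  set β := errorPattern ε
  set cnt : (Fin M → Bool) → ℝ := fun b => ∑ i, if b i then 1 else 0
  have hp := hε.condExp_indicator_errorPattern
  have hsum : ∀ᵐ ω ∂μ, ∑ b : Fin M → Bool, (∏ i, if b i then L ω else 1 - L ω) = 1 :=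
    .of_forall fun ω => sum_prod_pi_eq_one (fun c : Bool => if c then L ω else 1 - L ω) (by simp) M
  have hm := le_of_condExp_indicator_fiber hp hsum
  have hβ := nullMeasurableSet_fiber_of_condExp_indicator hp hsum
  have hLD := hε.aestronglyMeasurable hM
  set h : (Fin M → Bool) → Ω → ℝ := fun b ω => if s < |cnt b / M - L ω| then 1 else 0
  have hh : ∀ b, AEStronglyMeasurable[mD] (h b) μ := fun b =>
    Measurable.comp_aestronglyMeasurable (φ := fun x => if s < |cnt b / M - x| then 1 else 0)
      (Measurable.ite (measurableSet_lt measurable_const (measurable_const.sub measurable_id).abs)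
        measurable_const measurable_const) hLD
  set E := {ω | s < |(∑ j, if ε j ω then (1 : ℝ) else 0) / M - L ω|}
  have hcnt : ∀ ω, (∑ j, if ε j ω then (1 : ℝ) else 0) = cnt (β ω) := fun ω => by
    simp [cnt, β, errorPattern]
  have hE : NullMeasurableSet E μ := by
    have hE_eq : E = ⋃ b, β ⁻¹' {b} ∩ {ω | s < |cnt b / M - L ω|} := by
      ext ω; simp [E, hcnt]
    have hL0 : AEMeasurable L μ := (hLD.mono hm).aemeasurable
    rw [hE_eq]
    exact .iUnion fun b => (hβ b).inter (nullMeasurableSet_lt aemeasurable_const (by fun_prop))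
  have hE_ind : ∀ ω, E.indicator (fun _ => (1 : ℝ)) ω = h (β ω) ω := fun ω => by
    simp [E, h, Set.indicator_apply, hcnt]
  calc μ E = ENNReal.ofReal (∫ ω, h (β ω) ω ∂μ) := by
        rw [← integral_congr_ae (.of_forall hE_ind), integral_indicator₀ hE, setIntegral_const,
          smul_eq_mul, mul_one, ofReal_measureReal]
    _ = ENNReal.ofReal (∫ ω, ∑ b, (∏ i, if b i then L ω else 1 - L ω) * h b ω ∂μ) := by
        rw [integral_apply_fiber_eq_integral_sum_mul hm hβ hp hh (C := 1)
          fun b ω => by simp only [h]; split_ifs <;> simp]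
    _ ≤ ENNReal.ofReal (1 / (4 * M * s ^ 2)) := by
        refine ENNReal.ofReal_le_ofReal ((integral_mono_of_nonneg ?_ (integrable_const _)
          (.of_forall fun ω => sum_bernoulli_mul_ite_lt_abs_le hM (hL ω) hs)).trans_eq ?_)
        · refine .of_forall fun ω => Finset.sum_nonneg fun b _ => mul_nonneg
            (Finset.prod_nonneg fun i _ => ?_) (by split_ifs <;> norm_num)
          obtain ⟨hL0, hL1⟩ := hL ω
          split_ifs <;> linarith
        · simp

end CondIIDBernoulli

lemma abs_sum_sq_sub_div_sub_le {M : ℕ} (hM : 0 < M) {e : Fin M → ℝ} (he : ∀ j, e j ^ 2 = e j)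
    {ℓ : ℝ} (hℓ : ℓ ∈ Set.Icc (0 : ℝ) 1) (x : ℝ) :
    |(∑ j, (e j - ℓ) ^ 2) / M - x * (1 - x)| ≤ |(∑ j, e j) / M - ℓ| + (1 + |x|) * |ℓ - x| := by
  obtain ⟨hℓ0, hℓ1⟩ := hℓ
  have hM' : (M : ℝ) ≠ 0 := by positivity
  have hterm : ∀ j, (e j - ℓ) ^ 2 = (1 - 2 * ℓ) * e j + ℓ ^ 2 := fun j => by
    rw [sub_sq, he]; ring
  have hsq : ∑ j, (e j - ℓ) ^ 2 = (1 - 2 * ℓ) * ∑ j, e j + M * ℓ ^ 2 := by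
    simp only [hterm, Finset.sum_add_distrib, ← Finset.mul_sum, Finset.sum_const,
      Finset.card_univ, Fintype.card_fin, nsmul_eq_mul]
  have hsplit : (∑ j, (e j - ℓ) ^ 2) / M - x * (1 - x)
      = (1 - 2 * ℓ) * ((∑ j, e j) / M - ℓ) + (ℓ - x) * (1 - ℓ - x) := by
    rw [hsq]; field_simp; ring
  rw [hsplit]
  calc _ ≤ |1 - 2 * ℓ| * |(∑ j, e j) / M - ℓ| + |ℓ - x| * |1 - ℓ - x| := by
        rw [← abs_mul, ← abs_mul]; exact abs_add_le _ _
    _ ≤ 1 * |(∑ j, e j) / M - ℓ| + |ℓ - x| * (1 + |x|) := by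
        gcongr
        · exact abs_le.2 ⟨by linarith, by linarith⟩
        · exact (abs_sub _ _).trans (by rw [abs_of_nonneg (by linarith : 0 ≤ 1 - ℓ)]; linarith)
    _ = _ := by ring

theorem sum_sq_martingale_differences_tendsto_general
    {Ω : Type*} [MeasurableSpace Ω] (μ : Measure Ω) [IsProbabilityMeasure μ]
    (m : ℕ → ℕ) (mD : ℕ → MeasurableSpace Ω)
    (ε : ∀ n, Fin (m n) → Ω → Prop) (L : ℕ → Ω → ℝ) (Lstar : ℝ)
    (hcond : ∀ n, CondIIDBernoulli μ (mD n) (ε n) (L n))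
    (hLbd : ∀ n ω, L n ω ∈ Set.Icc (0 : ℝ) 1)
    (hm : Tendsto m atTop atTop)
    (hcons : ∀ δ : ℝ, 0 < δ →
      Tendsto (fun n => μ {ω | |L n ω - Lstar| > δ}) atTop (𝓝 0)) :
    ∀ t : ℝ, 0 < t →
      Tendsto (fun n =>
          μ {ω | |(∑ j, ((if ε n j ω then (1 : ℝ) else 0) - L n ω) ^ 2) / (m n : ℝ)
                - Lstar * (1 - Lstar)| > t})
        atTop (𝓝 0) := by
  intro t ht
  set δ := t / 2 / (1 + |Lstar|)
  have hδ : 0 < δ := by positivity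
  have hbound : ∀ᶠ n in atTop,
      μ {ω | |(∑ j, ((if ε n j ω then (1 : ℝ) else 0) - L n ω) ^ 2) / (m n : ℝ)
          - Lstar * (1 - Lstar)| > t}
        ≤ ENNReal.ofReal (1 / (4 * m n * (t / 2) ^ 2)) + μ {ω | |L n ω - Lstar| > δ} := by
    filter_upwards [hm.eventually_gt_atTop 0] with n hn
    refine (measure_mono fun ω hω => ?_).trans ((measure_union_le _ _).trans
      (add_le_add_left ((hcond n).measure_lt_abs_mean_sub_le hn (hLbd n) (half_pos ht)) _))
    by_contra hω'
    simp only [Set.mem_union, Set.mem_ofPred_eq, not_or, not_lt] at hω hω'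
    have hdecomp := abs_sum_sq_sub_div_sub_le hn (e := fun j => if ε n j ω then 1 else 0)
      (fun j => by split_ifs <;> norm_num) (hLbd n ω) Lstar
    have hLclose : (1 + |Lstar|) * |L n ω - Lstar| ≤ t / 2 := by
      rw [← le_div_iff₀' (by positivity)]; exact hω'.2
    linarith
  have hlim : Tendsto (fun n => 1 / (4 * (m n : ℝ) * (t / 2) ^ 2)) atTop (𝓝 0) :=
    tendsto_const_nhds.div_atTop <| ((tendsto_natCast_atTop_atTop.comp hm).const_mul_atTop
      (by norm_num)).atTop_mul_const (by positivity)
  refine tendsto_of_tendsto_of_tendsto_of_le_of_le' tendsto_const_nhds ?_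
    (.of_forall fun _ => bot_le) hbound
  simpa using (ENNReal.tendsto_ofReal hlim).add (hcons δ hδ)

/-- In the martingale array of the CLT for the test error, with
`X_{n,j} = (ε_j − L_{D_n}) / √(m_n)`, the sum of squared martingale differences
converges in probability: `Σ_j X_{n,j}² →_p L*(1 − L*)`. -/
theorem sum_sq_martingale_differences_tendsto
    {Ω : Type*} [MeasurableSpace Ω] (μ : Measure Ω) [IsProbabilityMeasure μ]
    (m : ℕ → ℕ) (mD : ℕ → MeasurableSpace Ω)
    (ε : ∀ n, Fin (m n) → Ω → Prop) (L : ℕ → Ω → ℝ) (Lstar : ℝ)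
    (hcond : ∀ n, CondIIDBernoulli μ (mD n) (ε n) (L n))
    (hLmeas : ∀ n, Measurable (L n))
    (hLbd : ∀ n ω, L n ω ∈ Set.Icc (0 : ℝ) 1)
    (hm : Tendsto m atTop atTop)
    (hcons : ∀ δ : ℝ, 0 < δ →
      Tendsto (fun n => μ {ω | |L n ω - Lstar| > δ}) atTop (𝓝 0)) :
    ∀ t : ℝ, 0 < t →
      Tendsto (fun n =>
          μ {ω | |(∑ j, ((if ε n j ω then (1 : ℝ) else 0) - L n ω) ^ 2) / (m n : ℝ)
                - Lstar * (1 - Lstar)| > t})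
        atTop (𝓝 0) :=
  sum_sq_martingale_differences_tendsto_general μ m mD ε L Lstar hcond hLbd hm hcons
end

section
/- Assume √K·(Û_{2n,K} − E[L_{n_t−1}])/σ̂_n →_D N(0,1), that (√K·(E[L_{n_t−1}] − L*))/σ̂_n → a ∈ ℝ under the alternative, that σ̂_n ≤ 1, √K/n_t → ∞, and L* < 1/2. Then the test rejecting when √K(Û_{2n,K} − 1/2)/σ̂_n < Φ^{-1}(α) has asymptotic level α under the null (where E[L_{n_t−1}] = L* = 1/2) and its power converges to 1 under the alternative. -/
/-!
Under the null the test statistic is exactly the standardized statistic, so the rejection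
probability converges to `Φ(Φ⁻¹(α)) = α` by the portmanteau theorem. Under the alternative
the statistic splits as the standardized statistic, plus a term close to `a`, plus
`√K (L* − 1/2)/σ̂ ≤ √K (L* − 1/2) → −∞` (using `0 < σ̂ ≤ 1`); hence it eventually falls below
any level with probability at least `Φ(M) − ε` for every `M`, and `Φ(M) → 1`.
-/

open MeasureTheory ProbabilityTheory Filter
open scoped Topology

/-- The standard normal cumulative distribution function `Φ`. -/
noncomputable def stdNormalCDF (x : ℝ) : ℝ :=
  ((gaussianReal 0 1) (Set.Iic x)).toReal

section ConvergenceOfIntegrals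

variable {Ω : Type*} [MeasurableSpace Ω] {μ : Measure Ω} {ν : Measure ℝ}
  [IsProbabilityMeasure ν] {X : ℕ → Ω → ℝ}

noncomputable def arctanAddPi : BoundedContinuousFunction ℝ ℝ :=
  .ofNormedAddCommGroup (fun x => Real.arctan x + Real.pi) (by fun_prop) (2 * Real.pi)
    fun x => by
      have := Real.arctan_lt_pi_div_two x
      have := Real.neg_pi_div_two_lt_arctan x
      rw [Real.norm_eq_abs, abs_le]
      constructor <;> linarith [Real.pi_pos]

lemma arctanAddPi_apply (x : ℝ) : arctanAddPi x = Real.arctan x + Real.pi := rfl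

lemma arctanAddPi_pos (x : ℝ) : 0 < arctanAddPi x := by
  rw [arctanAddPi_apply]
  linarith [Real.neg_pi_div_two_lt_arctan x, Real.pi_pos]

lemma Real.measurable_tan : Measurable Real.tan := by
  rw [show Real.tan = fun x => Real.sin x / Real.cos x from funext Real.tan_eq_sin_div_cos]
  exact Real.measurable_sin.div Real.measurable_cos

/-- The integrals are those of `f ∘ X n`, which vanish when `X n` is not a.e. measurable; testing
against the positive `arctanAddPi` rules that out for large `n`. -/
lemma eventually_aemeasurable_of_tendsto_integral
    (hX : ∀ f : BoundedContinuousFunction ℝ ℝ,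
      Tendsto (fun n => ∫ ω, f (X n ω) ∂μ) atTop (𝓝 (∫ x, f x ∂ν))) :
    ∀ᶠ n in atTop, AEMeasurable (X n) μ := by
  have hlim : 0 < ∫ x, arctanAddPi x ∂ν := by
    rw [integral_pos_iff_support_of_nonneg (fun x => (arctanAddPi_pos x).le)
      (arctanAddPi.integrable ν), Function.support_eq_univ fun x => (arctanAddPi_pos x).ne']
    simp
  filter_upwards [(hX arctanAddPi).eventually (eventually_gt_nhds hlim)] with n hn
  have hint : Integrable (fun ω => arctanAddPi (X n ω)) μ := by
    by_contra h
    rw [integral_undef h] at hn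
    exact hn.false
  have harctan : AEMeasurable (fun ω => Real.arctan (X n ω)) μ := by
    simpa only [arctanAddPi_apply, add_sub_cancel_right] using
      hint.aemeasurable.sub_const Real.pi
  simpa only [Function.comp_def, Real.tan_arctan] using
    Real.measurable_tan.comp_aemeasurable harctan

variable [IsProbabilityMeasure μ]

lemma tendsto_measure_lt_of_tendsto_integral
    (hX : ∀ f : BoundedContinuousFunction ℝ ℝ,
      Tendsto (fun n => ∫ ω, f (X n ω) ∂μ) atTop (𝓝 (∫ x, f x ∂ν)))
    {t : ℝ} (ht : ν {t} = 0) :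
    Tendsto (fun n => (μ {ω | X n ω < t}).toReal) atTop (𝓝 (ν (Set.Iio t)).toReal) := by
  obtain ⟨N, hN⟩ := eventually_atTop.1 (eventually_aemeasurable_of_tendsto_integral hX)
  have hmeas (n : ℕ) : AEMeasurable (X (n + N)) μ := hN _ (Nat.le_add_left N n)
  let laws (n : ℕ) : ProbabilityMeasure ℝ :=
    ⟨μ.map (X (n + N)), Measure.isProbabilityMeasure_map (hmeas n)⟩
  have hlaws : Tendsto laws atTop (𝓝 ⟨ν, inferInstance⟩) := by
    refine ProbabilityMeasure.tendsto_iff_forall_integral_tendsto.2 fun f => ?_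
    simp only [laws, ProbabilityMeasure.coe_mk,
      integral_map (hmeas _) f.continuous.aestronglyMeasurable]
    exact (tendsto_add_atTop_iff_nat N).2 (hX f)
  have hfrontier : ν (frontier (Set.Iio t)) = 0 := by rwa [frontier_Iio]
  have hlim := (ENNReal.tendsto_toReal (measure_ne_top ν _)).comp
    (ProbabilityMeasure.tendsto_measure_of_null_frontier_of_tendsto' hlaws hfrontier)
  refine (tendsto_add_atTop_iff_nat N).1 (hlim.congr fun n => ?_)
  simp only [Function.comp_apply, laws, ProbabilityMeasure.coe_mk,
    Measure.map_apply_of_aemeasurable (hmeas n) measurableSet_Iio]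
  rfl

end ConvergenceOfIntegrals

instance : NullSingletonClass (gaussianReal 0 1) :=
  nullSingletonClass_gaussianReal one_ne_zero

lemma stdNormalCDF_eq_measure_Iio (t : ℝ) :
    stdNormalCDF t = (gaussianReal 0 1 (Set.Iio t)).toReal := by
  rw [stdNormalCDF, measure_congr Iio_ae_eq_Iic]

lemma tendsto_stdNormalCDF_atTop : Tendsto stdNormalCDF atTop (𝓝 1) := by
  unfold stdNormalCDF
  simpa only [Function.comp_def, measure_univ, ENNReal.toReal_one] using
    (ENNReal.tendsto_toReal (measure_ne_top _ _)).comp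
      (tendsto_measure_Iic_atTop (gaussianReal 0 1))

lemma tendsto_measure_lt_stdNormalCDF {Ω : Type*} [MeasurableSpace Ω] {μ : Measure Ω}
    [IsProbabilityMeasure μ] {X : ℕ → Ω → ℝ}
    (hX : ∀ f : BoundedContinuousFunction ℝ ℝ,
      Tendsto (fun n => ∫ ω, f (X n ω) ∂μ) atTop (𝓝 (∫ x, f x ∂(gaussianReal 0 1))))
    (t : ℝ) :
    Tendsto (fun n => (μ {ω | X n ω < t}).toReal) atTop (𝓝 (stdNormalCDF t)) := by
  rw [stdNormalCDF_eq_measure_Iio]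
  exact tendsto_measure_lt_of_tendsto_integral hX (measure_singleton t)

lemma tendsto_atTop_of_tendsto_div_natCast {ι : Type*} {l : Filter ι} {f : ι → ℝ}
    {g : ι → ℕ} (h : Tendsto (fun i => f i / g i) l atTop) : Tendsto f l atTop := by
  refine tendsto_atTop_mono' l ?_ h
  filter_upwards [h.eventually_gt_atTop 0] with i hi
  have hg : 0 < g i := Nat.pos_of_ne_zero fun h0 => by simp [h0] at hi
  exact div_le_self (div_pos_iff_of_pos_right (Nat.cast_pos.2 hg) |>.1 hi).le
    (Nat.one_le_cast.2 hg)

lemma tendsto_measure_lt_one_of_le_add {Ω : Type*} [MeasurableSpace Ω] {μ : Measure Ω}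
    [IsProbabilityMeasure μ] {X T : ℕ → Ω → ℝ} {F : ℝ → ℝ} {c : ℕ → ℝ} {B : ℕ → Set Ω}
    (hX : ∀ M, Tendsto (fun n => (μ {ω | X n ω < M}).toReal) atTop (𝓝 (F M)))
    (hF : Tendsto F atTop (𝓝 1)) (hB : Tendsto (fun n => μ (B n)) atTop (𝓝 0))
    (hc : Tendsto c atTop atBot) (hT : ∀ n, ∀ ω ∉ B n, T n ω ≤ X n ω + c n) (q : ℝ) :
    Tendsto (fun n => (μ {ω | T n ω < q}).toReal) atTop (𝓝 1) := by
  refine tendsto_order.2 ⟨fun r hr => ?_, fun r hr => .of_forall fun n =>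
    (measureReal_le_one (μ := μ)).trans_lt hr⟩
  obtain ⟨M, hM⟩ := (hF.eventually (eventually_gt_nhds hr)).exists
  have hB' : Tendsto (fun n => (μ (B n)).toReal) atTop (𝓝 0) := by
    simpa only [Function.comp_def, ENNReal.toReal_zero] using
      (ENNReal.tendsto_toReal ENNReal.zero_ne_top).comp hB
  have hlower := ((hX M).sub hB').eventually (eventually_gt_nhds (by rwa [sub_zero]))
  filter_upwards [hlower, hc.eventually_le_atBot (q - M)] with n hn hcn
  have hsub : {ω | X n ω < M} ⊆ {ω | T n ω < q} ∪ B n := fun ω hω => by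
    by_cases hω' : ω ∈ B n
    · exact .inr hω'
    · exact .inl (show T n ω < q by linarith [hT n ω hω', hω.out])
  have := measureReal_mono (μ := μ) hsub |>.trans (measureReal_union_le _ _)
  simp only [measureReal_def] at this
  linarith

lemma mul_sub_half_div_le {s σ L : ℝ} (u e : ℝ) (hs : 0 ≤ s) (hσ₀ : 0 < σ) (hσ₁ : σ ≤ 1)
    (hL : L ≤ 1/2) :
    s * (u - 1/2) / σ ≤ s * (u - e) / σ + s * (e - L) / σ + s * (L - 1/2) := by
  have hdrift : s * (L - 1/2) / σ ≤ s * (L - 1/2) := by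
    rw [div_le_iff₀ hσ₀]
    nlinarith [mul_nonpos_of_nonneg_of_nonpos hs (sub_nonpos.2 hL)]
  calc s * (u - 1/2) / σ = s * (u - e) / σ + s * (e - L) / σ + s * (L - 1/2) / σ := by ring
    _ ≤ s * (u - e) / σ + s * (e - L) / σ + s * (L - 1/2) := by linarith

theorem ustat_test_level_and_power_general
    {Ω : Type*} [MeasurableSpace Ω] (μ : Measure Ω) [IsProbabilityMeasure μ]
    (K nt : ℕ → ℕ) (U : ℕ → Ω → ℝ) (σh : ℕ → Ω → ℝ) (EL : ℕ → ℝ) (Lstar : ℝ)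
    (α qα : ℝ) (hq : stdNormalCDF qα = α)
    (hσpos : ∀ n ω, 0 < σh n ω) (hσbd : ∀ n ω, σh n ω ≤ 1)
    (hrate : Tendsto (fun n => Real.sqrt (K n) / (nt n : ℝ)) atTop atTop)
    (hCLT : ∀ f : BoundedContinuousFunction ℝ ℝ,
      Tendsto (fun n => ∫ ω, f (Real.sqrt (K n) * (U n ω - EL n) / σh n ω) ∂μ)
        atTop (𝓝 (∫ x, f x ∂(gaussianReal 0 1)))) :
    ((∀ n, EL n = 1/2) → Lstar = 1/2 →
      Tendsto (fun n =>
          (μ {ω | Real.sqrt (K n) * (U n ω - 1/2) / σh n ω < qα}).toReal)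
        atTop (𝓝 α)) ∧
    (∀ a : ℝ, Lstar < 1/2 →
      (∀ δ : ℝ, 0 < δ →
        Tendsto (fun n =>
            μ {ω | |Real.sqrt (K n) * (EL n - Lstar) / σh n ω - a| > δ})
          atTop (𝓝 0)) →
      Tendsto (fun n =>
          (μ {ω | Real.sqrt (K n) * (U n ω - 1/2) / σh n ω < qα}).toReal)
        atTop (𝓝 1)) := by
  have hcdf := tendsto_measure_lt_stdNormalCDF hCLT
  refine ⟨fun hnull _ => ?_, fun a hL hprob => ?_⟩
  · simpa only [hnull, hq] using hcdf qα
  have hshift : Tendsto (fun n => Real.sqrt (K n) * (Lstar - 1/2) + (a + 1)) atTop atBot :=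
    tendsto_atBot_add_const_right _ _
      ((tendsto_atTop_of_tendsto_div_natCast hrate).atTop_mul_const_of_neg (by linarith))
  refine tendsto_measure_lt_one_of_le_add hcdf tendsto_stdNormalCDF_atTop (hprob 1 one_pos)
    hshift (fun n ω hω => ?_) qα
  have hY : Real.sqrt (K n) * (EL n - Lstar) / σh n ω - a ≤ 1 :=
    (abs_le.1 (not_lt.1 hω)).2
  linarith [mul_sub_half_div_le (U n ω) (EL n) (Real.sqrt_nonneg (K n)) (hσpos n ω)
    (hσbd n ω) hL.le]

/-- For the U-statistic test: assume the standardized statistic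
`√K (Û_{2n,K} − E[L_{n_t−1}])/σ̂` is asymptotically `N(0,1)`, `σ̂ ≤ 1` and
`√K / n_t → ∞`. Then the test rejecting when `√K (Û_{2n,K} − 1/2)/σ̂ < Φ⁻¹(α)` has
asymptotic level `α` under the null (where `E[L_{n_t−1}] = L* = 1/2`), and if under the
alternative `√K (E[L_{n_t−1}] − L*)/σ̂ → a ∈ ℝ` (in probability) with `L* < 1/2`, its
power converges to 1. -/
theorem ustat_test_level_and_power
    {Ω : Type*} [MeasurableSpace Ω] (μ : Measure Ω) [IsProbabilityMeasure μ]
    (K nt : ℕ → ℕ) (U : ℕ → Ω → ℝ) (σh : ℕ → Ω → ℝ) (EL : ℕ → ℝ) (Lstar : ℝ)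
    (α qα : ℝ) (hα0 : 0 < α) (hα1 : α < 1) (hq : stdNormalCDF qα = α)
    (hσpos : ∀ n ω, 0 < σh n ω) (hσbd : ∀ n ω, σh n ω ≤ 1)
    (hrate : Tendsto (fun n => Real.sqrt (K n) / (nt n : ℝ)) atTop atTop)
    (hCLT : ∀ f : BoundedContinuousFunction ℝ ℝ,
      Tendsto (fun n => ∫ ω, f (Real.sqrt (K n) * (U n ω - EL n) / σh n ω) ∂μ)
        atTop (𝓝 (∫ x, f x ∂(gaussianReal 0 1)))) :
    ((∀ n, EL n = 1/2) → Lstar = 1/2 →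
      Tendsto (fun n =>
          (μ {ω | Real.sqrt (K n) * (U n ω - 1/2) / σh n ω < qα}).toReal)
        atTop (𝓝 α)) ∧
    (∀ a : ℝ, Lstar < 1/2 →
      (∀ δ : ℝ, 0 < δ →
        Tendsto (fun n =>
            μ {ω | |Real.sqrt (K n) * (EL n - Lstar) / σh n ω - a| > δ})
          atTop (𝓝 0)) →
      Tendsto (fun n =>
          (μ {ω | Real.sqrt (K n) * (U n ω - 1/2) / σh n ω < qα}).toReal)
        atTop (𝓝 1)) :=
  ustat_test_level_and_power_general μ K nt U σh EL Lstar α qα hq hσpos hσbd hrate hCLT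
end
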